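/- arXiv:2410.14592 — 3 statements merged into one kernel-verified Lean document; each statement's English description precedes it below -/
import Mathlib

section
/- Let F : ℝ^n ⇉ ℝ^n be maximally monotone and (1/L)-inverse Lipschitz. Then its resolvent J_F = (Id + F)^{-1} is single-valued, everywhere defined, and Lipschitz continuous with constant L/√(L²+1) < 1 (hence a contraction). -/
/-!
Uniqueness and the Lipschitz bound are direct: for `x = J ω` and `x' = J ω'` the vectors
`d = x - x'` and `e = (ω - x) - (ω' - x')` satisfy `0 ≤ ⟪d, e⟫` and `‖d‖ ≤ L ‖e‖`, so
`‖ω - ω'‖² = ‖d + e‖² ≥ ‖d‖² + ‖e‖² ≥ (1 + 1 / L²) ‖d‖²`.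

The substance is Minty's theorem: `Id + F` is onto. By monotonicity the Cayley transform
`x + u ↦ x - u` of the graph of `F` is nonexpansive. Kirszbraun's theorem extends it to one more
point `y`, with value `w` say, and maximality then puts `y - x` into `F x` for `x = (y + w) / 2`.
For finitely many points `N i = f (Y i)` the extension is a minimiser of
`z ↦ maxᵢ (‖N i - z‖² - ‖Y i - y‖²)`: it lies in the convex hull of the active `N i`, and the
weighted variance identity `∑ᵢ ∑ⱼ wᵢ wⱼ ‖aᵢ - aⱼ‖² = 2 ∑ᵢ wᵢ ‖aᵢ - z‖² - 2 ‖∑ᵢ wᵢ aᵢ - z‖²`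
shows that the minimum is `≤ 0`. Compactness of balls passes to arbitrary families.
-/

noncomputable section

abbrev Evec (n : ℕ) := EuclideanSpace ℝ (Fin n)

open Finset
open scoped RealInnerProductSpace

section Kirszbraun

variable {ι E : Type*} [NormedAddCommGroup E] [InnerProductSpace ℝ E]

theorem sum_sum_mul_mul_norm_sub_sq {s : Finset ι} {w : ι → ℝ} (hw : ∑ i ∈ s, w i = 1)
    (a : ι → E) (z : E) :
    ∑ i ∈ s, ∑ j ∈ s, w i * w j * ‖a i - a j‖ ^ 2 =
      2 * ∑ i ∈ s, w i * ‖a i - z‖ ^ 2 - 2 * ‖∑ i ∈ s, w i • a i - z‖ ^ 2 := by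
  set b : ι → E := fun i => a i - z
  have hab : ∀ i j, a i - a j = b i - b j := fun i j => by simp [b]
  have hsum : ∑ i ∈ s, w i • a i - z = ∑ i ∈ s, w i • b i := by
    simp only [b, smul_sub, sum_sub_distrib, ← sum_smul, hw, one_smul]
  have hinner : ‖∑ i ∈ s, w i • b i‖ ^ 2 = ∑ i ∈ s, ∑ j ∈ s, w i * w j * ⟪b i, b j⟫ := by
    simp only [← real_inner_self_eq_norm_sq, sum_inner, inner_sum, real_inner_smul_left,
      real_inner_smul_right, mul_assoc]
    rw [sum_comm]
    exact sum_congr rfl fun _ _ => sum_congr rfl fun _ _ => by ring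
  calc ∑ i ∈ s, ∑ j ∈ s, w i * w j * ‖a i - a j‖ ^ 2
      = ∑ i ∈ s, ∑ j ∈ s, (w i * ‖b i‖ ^ 2 * w j + w i * (w j * ‖b j‖ ^ 2)
          - 2 * (w i * w j * ⟪b i, b j⟫)) := by
        refine sum_congr rfl fun i _ => sum_congr rfl fun j _ => ?_
        rw [hab, norm_sub_sq_real]
        ring
    _ = (∑ i ∈ s, w i * ‖b i‖ ^ 2) * ∑ j ∈ s, w j + (∑ i ∈ s, w i) * ∑ j ∈ s, w j * ‖b j‖ ^ 2
          - 2 * ∑ i ∈ s, ∑ j ∈ s, w i * w j * ⟪b i, b j⟫ := by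
        rw [sum_mul_sum, sum_mul_sum, mul_sum]
        simp only [mul_sum, ← sum_add_distrib, ← sum_sub_distrib]
    _ = 2 * ∑ i ∈ s, w i * ‖a i - z‖ ^ 2 - 2 * ‖∑ i ∈ s, w i • a i - z‖ ^ 2 := by
        rw [hw, hsum, hinner]
        ring

theorem sum_mul_norm_sub_sq_le {s : Finset ι} {w : ι → ℝ} (hw₀ : ∀ i ∈ s, 0 ≤ w i)
    (hw₁ : ∑ i ∈ s, w i = 1) {N Y : ι → E}
    (hNY : ∀ i ∈ s, ∀ j ∈ s, ‖N i - N j‖ ≤ ‖Y i - Y j‖) (y : E) :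
    ∑ i ∈ s, w i * ‖N i - ∑ j ∈ s, w j • N j‖ ^ 2 ≤ ∑ i ∈ s, w i * ‖Y i - y‖ ^ 2 := by
  have hN := sum_sum_mul_mul_norm_sub_sq hw₁ N (∑ j ∈ s, w j • N j)
  have hY := sum_sum_mul_mul_norm_sub_sq hw₁ Y y
  have hle : ∑ i ∈ s, ∑ j ∈ s, w i * w j * ‖N i - N j‖ ^ 2 ≤
      ∑ i ∈ s, ∑ j ∈ s, w i * w j * ‖Y i - Y j‖ ^ 2 := by
    gcongr with i hi j hj
    · exact mul_nonneg (hw₀ i hi) (hw₀ j hj)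
    · exact hNY i hi j hj
  rw [sub_self, norm_zero] at hN
  nlinarith [sq_nonneg ‖∑ i ∈ s, w i • Y i - y‖]

theorem exists_norm_sub_le_of_mem_convexHull {A : Set ι} {N Y : ι → E}
    (hNY : ∀ i ∈ A, ∀ j ∈ A, ‖N i - N j‖ ≤ ‖Y i - Y j‖) (y : E) {z : E}
    (hz : z ∈ convexHull ℝ (N '' A)) : ∃ i ∈ A, ‖N i - z‖ ≤ ‖Y i - y‖ := by
  rw [Set.image_eq_range, convexHull_range_eq_exists_affineCombination] at hz
  obtain ⟨t, w, hw₀, hw₁, rfl⟩ := hz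
  rw [affineCombination_eq_linear_combination _ _ _ hw₁]
  have hle := sum_mul_norm_sub_sq_le hw₀ hw₁ (N := fun k : A => N k) (Y := fun k : A => Y k)
    (fun k _ l _ => hNY k k.2 l l.2) y
  by_contra! hfar
  obtain ⟨k, hk, hwk⟩ : ∃ k ∈ t, 0 < w k :=
    exists_lt_of_sum_lt (by rw [sum_const_zero, hw₁]; exact one_pos)
  refine hle.not_gt (sum_lt_sum (fun l hl => ?_) ⟨k, hk, ?_⟩)
  · gcongr
    exacts [hw₀ l hl, (hfar l l.2).le]
  · gcongr
    exact hfar k k.2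

open Filter Topology in
theorem mem_convexHull_of_minimizes_max {s : Finset ι} {N : ι → E} {c : ι → ℝ} {z₀ : E} {μ : ℝ}
    (hle : ∀ i ∈ s, ‖N i - z₀‖ ^ 2 - c i ≤ μ)
    (hmin : ∀ z, ∃ i ∈ s, μ ≤ ‖N i - z‖ ^ 2 - c i) :
    z₀ ∈ convexHull ℝ (N '' {i | i ∈ s ∧ ‖N i - z₀‖ ^ 2 - c i = μ}) := by
  set A := {i | i ∈ s ∧ ‖N i - z₀‖ ^ 2 - c i = μ}
  have hconv : Convex ℝ (convexHull ℝ (N '' A)) := convex_convexHull ℝ _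
  have hA : A.Finite := s.finite_toSet.subset fun _ hi => hi.1
  have hcompact : IsCompact (convexHull ℝ (N '' A)) := (hA.image N).isCompact_convexHull ℝ
  obtain ⟨i₀, hi₀, hμ⟩ := hmin z₀
  have hne : (convexHull ℝ (N '' A)).Nonempty :=
    ⟨N i₀, subset_convexHull ℝ _ ⟨i₀, ⟨hi₀, (hle i₀ hi₀).antisymm hμ⟩, rfl⟩⟩
  by_contra hz
  obtain ⟨p, hpC, hp⟩ :=
    exists_norm_eq_iInf_of_complete_convex hne hcompact.isComplete hconv z₀
  have hproj := (norm_eq_iInf_iff_real_inner_le_zero hconv hpC).1 hp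
  set v := p - z₀ with hv_def
  have hv : 0 < ‖v‖ := norm_pos_iff.2 (sub_ne_zero.2 fun h => hz (h ▸ hpC))
  -- moving from `z₀` towards its projection `p` strictly decreases every active distance
  have hactive : ∀ i ∈ A, ‖v‖ ^ 2 ≤ ⟪N i - z₀, v⟫ := by
    intro i hi
    have h := hproj (N i) (subset_convexHull ℝ _ ⟨i, hi, rfl⟩)
    have : ⟪N i - z₀, v⟫ = ⟪N i - p, v⟫ + ‖v‖ ^ 2 := by
      rw [← real_inner_self_eq_norm_sq, ← inner_add_left, hv_def, sub_add_sub_cancel]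
    rw [this, hv_def, ← neg_sub z₀ p, inner_neg_right, real_inner_comm]
    linarith
  have hdecrease : ∀ᶠ t in 𝓝[>] (0 : ℝ), ∀ i ∈ s, ‖N i - (z₀ + t • v)‖ ^ 2 - c i < μ := by
    rw [eventually_all_finset]
    intro i hi
    by_cases hiA : i ∈ A
    · filter_upwards [Ioo_mem_nhdsGT two_pos] with t ⟨ht₀, ht₂⟩
      have hexp : ‖N i - (z₀ + t • v)‖ ^ 2 =
          ‖N i - z₀‖ ^ 2 - 2 * t * ⟪N i - z₀, v⟫ + t ^ 2 * ‖v‖ ^ 2 := by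
        rw [← sub_sub, norm_sub_sq_real, real_inner_smul_right, norm_smul, Real.norm_eq_abs,
          abs_of_pos ht₀]
        ring
      have := mul_le_mul_of_nonneg_left (hactive i hiA) ht₀.le
      nlinarith [hiA.2, mul_pos (mul_pos ht₀ (sub_pos.2 ht₂)) (pow_pos hv 2)]
    · have hlt : ‖N i - z₀‖ ^ 2 - c i < μ := (hle i hi).lt_of_ne fun h => hiA ⟨hi, h⟩
      refine nhdsWithin_le_nhds (ContinuousAt.eventually_lt ?_ continuousAt_const ?_)
      · fun_prop
      · simpa using hlt
  obtain ⟨t, ht⟩ := hdecrease.exists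
  obtain ⟨i, hi, hμi⟩ := hmin (z₀ + t • v)
  exact (ht i hi).not_ge hμi

open Filter Metric in
theorem exists_forall_norm_sub_le_of_finset [ProperSpace E] (s : Finset ι) {N Y : ι → E}
    (hNY : ∀ i ∈ s, ∀ j ∈ s, ‖N i - N j‖ ≤ ‖Y i - Y j‖) (y : E) :
    ∃ w, ∀ i ∈ s, ‖w - N i‖ ≤ ‖y - Y i‖ := by
  rcases s.eq_empty_or_nonempty with rfl | hs
  · exact ⟨0, by simp⟩
  set g : E → ℝ := fun z => s.sup' hs fun i => ‖N i - z‖ ^ 2 - ‖Y i - y‖ ^ 2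
  have hcont : Continuous g := Continuous.finset_sup'_apply hs fun i _ => by fun_prop
  have ⟨i₀, hi₀⟩ := hs
  have hcoercive : Tendsto g (cocompact E) atTop := by
    refine tendsto_atTop_mono (fun z => le_sup' (fun i => ‖N i - z‖ ^ 2 - ‖Y i - y‖ ^ 2) hi₀) ?_
    refine tendsto_atTop_add_const_right _ _ ((tendsto_pow_atTop two_ne_zero).comp ?_)
    exact (tendsto_dist_left_cocompact_atTop (N i₀)).congr fun z => dist_eq_norm _ _
  obtain ⟨z₀, hz₀⟩ := hcont.exists_forall_le hcoercive
  have hhull := mem_convexHull_of_minimizes_max (μ := g z₀)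
    (fun i hi => le_sup' (fun i => ‖N i - z₀‖ ^ 2 - ‖Y i - y‖ ^ 2) hi) fun z => by
    obtain ⟨i, hi, hgi⟩ := exists_mem_eq_sup' hs fun i => ‖N i - z‖ ^ 2 - ‖Y i - y‖ ^ 2
    exact ⟨i, hi, (hz₀ z).trans_eq hgi⟩
  obtain ⟨i, ⟨-, hμ⟩, hclose⟩ :=
    exists_norm_sub_le_of_mem_convexHull (fun i hi j hj => hNY i hi.1 j hj.1) y hhull
  have hg : g z₀ ≤ 0 := by
    rw [← hμ, sub_nonpos]
    gcongr
  refine ⟨z₀, fun j hj => ?_⟩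
  rw [norm_sub_rev, norm_sub_rev y, ← sq_le_sq₀ (norm_nonneg _) (norm_nonneg _)]
  linarith [(le_sup' (fun i => ‖N i - z₀‖ ^ 2 - ‖Y i - y‖ ^ 2) hj).trans hg]

open Metric in
theorem exists_forall_norm_sub_le [ProperSpace E] {N Y : ι → E}
    (hNY : ∀ i j, ‖N i - N j‖ ≤ ‖Y i - Y j‖) (y : E) : ∃ w, ∀ i, ‖w - N i‖ ≤ ‖y - Y i‖ := by
  classical
  rcases isEmpty_or_nonempty ι with hι | ⟨⟨i₀⟩⟩
  · exact ⟨0, isEmptyElim⟩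
  have hballs := (isCompact_closedBall (N i₀) ‖y - Y i₀‖).inter_iInter_nonempty
    (fun i => closedBall (N i) ‖y - Y i‖) (fun _ => isClosed_closedBall) fun u => by
      obtain ⟨w, hw⟩ := exists_forall_norm_sub_le_of_finset (insert i₀ u) (fun i _ j _ => hNY i j) y
      refine ⟨w, ?_, Set.mem_iInter₂.2 fun i hi => ?_⟩ <;> rw [mem_closedBall, dist_eq_norm]
      exacts [hw i₀ (mem_insert_self _ _), hw i (mem_insert_of_mem hi)]
  obtain ⟨w, -, hw⟩ := hballs
  exact ⟨w, fun i => by simpa only [mem_closedBall, dist_eq_norm] using Set.mem_iInter.1 hw i⟩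

end Kirszbraun

section MonotoneOperator

variable {E : Type*} [NormedAddCommGroup E] [InnerProductSpace ℝ E]

theorem inner_nonneg_iff_norm_sub_le_norm_add {a b : E} : 0 ≤ ⟪a, b⟫ ↔ ‖a - b‖ ≤ ‖a + b‖ := by
  rw [← sq_le_sq₀ (norm_nonneg _) (norm_nonneg _), norm_sub_sq_real, norm_add_sq_real]
  constructor <;> intro h <;> linarith

theorem norm_le_div_sqrt_mul_norm_add {d e : E} {L : ℝ} (hL : 0 ≤ L) (hde : 0 ≤ ⟪d, e⟫)
    (hd : ‖d‖ ≤ L * ‖e‖) : ‖d‖ ≤ L / √(L ^ 2 + 1) * ‖d + e‖ := by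
  rw [div_mul_eq_mul_div, le_div_iff₀ (by positivity), ← sq_le_sq₀ (by positivity) (by positivity),
    mul_pow, mul_pow, Real.sq_sqrt (by positivity), norm_add_sq_real]
  nlinarith [pow_le_pow_left₀ (norm_nonneg d) hd 2, mul_nonneg (sq_nonneg L) hde]

theorem div_sqrt_sq_add_one_lt_one (L : ℝ) : L / √(L ^ 2 + 1) < 1 := by
  rw [div_lt_one (by positivity)]
  refine (le_abs_self L).trans_lt ((Real.lt_sqrt (abs_nonneg L)).2 ?_)
  rw [sq_abs]
  linarith

def IsMonotoneOperator (F : E → Set E) : Prop :=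
  ∀ x x' u u', u ∈ F x → u' ∈ F x' → 0 ≤ ⟪u - u', x - x'⟫

def IsMaximalMonotoneOperator (F : E → Set E) : Prop :=
  IsMonotoneOperator F ∧
    ∀ x u, (∀ x' u', u' ∈ F x' → 0 ≤ ⟪u - u', x - x'⟫) → u ∈ F x

variable {F : E → Set E}

theorem IsMonotoneOperator.eq_of_sub_mem (hF : IsMonotoneOperator F) {y x x' : E}
    (hx : y - x ∈ F x) (hx' : y - x' ∈ F x') : x = x' := by
  have h := hF _ _ _ _ hx hx'
  rwa [sub_sub_sub_cancel_left, ← neg_sub, inner_neg_left, neg_nonneg, real_inner_self_nonpos,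
    sub_eq_zero] at h

theorem IsMonotoneOperator.norm_sub_le_of_sub_mem (hF : IsMonotoneOperator F) {L : ℝ}
    (hL : 0 ≤ L) (hinv : ∀ x x' u u', u ∈ F x → u' ∈ F x' → ‖x - x'‖ ≤ L * ‖u - u'‖)
    {ω ω' x x' : E} (hx : ω - x ∈ F x) (hx' : ω' - x' ∈ F x') :
    ‖x - x'‖ ≤ L / √(L ^ 2 + 1) * ‖ω - ω'‖ := by
  have hde : 0 ≤ ⟪x - x', (ω - x) - (ω' - x')⟫ := by
    rw [real_inner_comm]
    exact hF _ _ _ _ hx hx'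
  convert norm_le_div_sqrt_mul_norm_add hL hde (hinv _ _ _ _ hx hx') using 3
  abel

theorem IsMaximalMonotoneOperator.exists_sub_mem [ProperSpace E]
    (hF : IsMaximalMonotoneOperator F) (y : E) : ∃ x, y - x ∈ F x := by
  let G := {p : E × E // p.2 ∈ F p.1}
  have hcayley (p q : G) :
      ‖(p.1.1 - p.1.2) - (q.1.1 - q.1.2)‖ ≤ ‖(p.1.1 + p.1.2) - (q.1.1 + q.1.2)‖ := by
    have h : 0 ≤ ⟪p.1.1 - q.1.1, p.1.2 - q.1.2⟫ := by
      rw [real_inner_comm]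
      exact hF.1 _ _ _ _ p.2 q.2
    convert inner_nonneg_iff_norm_sub_le_norm_add.1 h using 2 <;> abel
  obtain ⟨w, hw⟩ := exists_forall_norm_sub_le (N := fun p : G => p.1.1 - p.1.2)
    (Y := fun p : G => p.1.1 + p.1.2) hcayley y
  refine ⟨(1 / 2 : ℝ) • (y + w), hF.2 _ _ fun x' u' hu' => ?_⟩
  rw [real_inner_comm, inner_nonneg_iff_norm_sub_le_norm_add]
  convert hw ⟨(x', u'), hu'⟩ using 2 <;> module

end MonotoneOperator

/-- If `F` is maximally monotone and `(1/L)`-inverse Lipschitz, then its resolvent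
`J_F = (Id + F)⁻¹` is single-valued, everywhere defined, and `L/√(L²+1)`-Lipschitz,
hence a contraction. -/
theorem resolvent_contractive_of_inverseLipschitz
    (n : ℕ) (L : ℝ) (hL : 0 < L) (F : Evec n → Set (Evec n))
    (hmono : ∀ ω ω' u u', u ∈ F ω → u' ∈ F ω' →
      (0 : ℝ) ≤ (inner ℝ (u - u') (ω - ω') : ℝ))
    (hmax : ∀ ω u, (∀ ω' u', u' ∈ F ω' →
      (0 : ℝ) ≤ (inner ℝ (u - u') (ω - ω') : ℝ)) → u ∈ F ω)
    (hinv : ∀ ω ω' u u', u ∈ F ω → u' ∈ F ω' →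
      (1 / L) * ‖ω - ω'‖ ≤ ‖u - u'‖) :
    ∃ J : Evec n → Evec n,
      (∀ ω v, ω - v ∈ F v ↔ v = J ω) ∧
      (∀ ω ω', ‖J ω - J ω'‖ ≤ (L / Real.sqrt (L ^ 2 + 1)) * ‖ω - ω'‖) ∧
      L / Real.sqrt (L ^ 2 + 1) < 1 := by
  have hF : IsMaximalMonotoneOperator F := ⟨hmono, hmax⟩
  have hlip : ∀ ω ω' u u', u ∈ F ω → u' ∈ F ω' → ‖ω - ω'‖ ≤ L * ‖u - u'‖ :=
    fun ω ω' u u' hu hu' => by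
      rw [← inv_mul_le_iff₀ hL, ← one_div]
      exact hinv ω ω' u u' hu hu'
  choose J hJ using hF.exists_sub_mem
  exact ⟨J, fun ω v => ⟨fun hv => hF.1.eq_of_sub_mem hv (hJ ω), fun hv => hv ▸ hJ ω⟩,
    fun ω ω' => hF.1.norm_sub_le_of_sub_mem hL.le hlip (hJ ω) (hJ ω'),
    div_sqrt_sq_add_one_lt_one L⟩
end
end

section
/- The block matrix Φ_{τ,σ} = [[(1/τ)Iₙ, -Aᵀ], [-A, (1/σ)I_m]] with τ, σ > 0 is symmetric positive definite whenever τσ‖A‖² < 1, where ‖A‖ is the operator (spectral) norm of A ∈ ℝ^{m×n}. -/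
/-!
Write `z = (x, y)`. The quadratic form of `Φ` is `τ⁻¹‖x‖² + σ⁻¹‖y‖² - 2⟪y, A x⟫`, which by
Cauchy–Schwarz is at least `τ⁻¹a² + σ⁻¹b² - 2‖A‖ab` with `a = ‖x‖`, `b = ‖y‖`. This binary
quadratic form `[[τ⁻¹, -‖A‖], [-‖A‖, σ⁻¹]]` is positive definite because its determinant
`(1 - τσ‖A‖²) / (τσ)` is positive.
-/

noncomputable section
open Matrix

/-- The operator (spectral) norm of a matrix. -/
noncomputable def opNorm {m n : ℕ} (A : Matrix (Fin m) (Fin n) ℝ) : ℝ :=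
  ‖(Matrix.toEuclideanLin A).toContinuousLinearMap‖

lemma dotProduct_self_eq_norm_toLp_sq {ι : Type*} [Fintype ι] (x : ι → ℝ) :
    x ⬝ᵥ x = ‖WithLp.toLp 2 x‖ ^ 2 := by
  rw [← real_inner_self_eq_norm_sq, EuclideanSpace.inner_toLp_toLp, star_trivial]

lemma dotProduct_mulVec_le_opNorm_mul {m n : ℕ} (A : Matrix (Fin m) (Fin n) ℝ)
    (x : Fin n → ℝ) (y : Fin m → ℝ) :
    y ⬝ᵥ (A *ᵥ x) ≤ opNorm A * ‖WithLp.toLp 2 x‖ * ‖WithLp.toLp 2 y‖ := by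
  have hinner : y ⬝ᵥ (A *ᵥ x) = inner ℝ (WithLp.toLp 2 (A *ᵥ x)) (WithLp.toLp 2 y) := by
    rw [EuclideanSpace.inner_toLp_toLp, star_trivial, dotProduct_comm]
  calc y ⬝ᵥ (A *ᵥ x) ≤ ‖WithLp.toLp 2 (A *ᵥ x)‖ * ‖WithLp.toLp 2 y‖ :=
        hinner ▸ real_inner_le_norm _ _
    _ ≤ opNorm A * ‖WithLp.toLp 2 x‖ * ‖WithLp.toLp 2 y‖ := by
        gcongr
        exact (toEuclideanLin A).toContinuousLinearMap.le_opNorm (WithLp.toLp 2 x)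

lemma sumElim_dotProduct_fromBlocks_mulVec_sumElim {R ι κ : Type*} [CommRing R]
    [Fintype ι] [Fintype κ] [DecidableEq ι] [DecidableEq κ]
    (a b : R) (A : Matrix κ ι R) (x : ι → R) (y : κ → R) :
    Sum.elim x y ⬝ᵥ (fromBlocks (a • 1) (-Aᵀ) (-A) (b • 1) *ᵥ Sum.elim x y) =
      a * (x ⬝ᵥ x) + b * (y ⬝ᵥ y) - 2 * (y ⬝ᵥ (A *ᵥ x)) := by
  have hcross : x ⬝ᵥ (Aᵀ *ᵥ y) = y ⬝ᵥ (A *ᵥ x) := by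
    rw [dotProduct_mulVec, vecMul_transpose, dotProduct_comm]
  rw [fromBlocks_mulVec, sumElim_dotProduct_sumElim]
  simp only [Sum.elim_comp_inl, Sum.elim_comp_inr, smul_mulVec, one_mulVec, neg_mulVec,
    dotProduct_add, dotProduct_smul, dotProduct_neg, smul_eq_mul, hcross]
  ring

lemma two_mul_mul_mul_lt_inv_mul_sq_add_inv_mul_sq {τ σ c a b : ℝ} (hτ : 0 < τ) (hσ : 0 < σ)
    (h : τ * σ * c ^ 2 < 1) (hab : a ≠ 0 ∨ b ≠ 0) :
    2 * (c * a * b) < τ⁻¹ * a ^ 2 + σ⁻¹ * b ^ 2 := by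
  have hsquare : τ * (τ⁻¹ * a ^ 2 + σ⁻¹ * b ^ 2 - 2 * (c * a * b)) =
      (a - c * τ * b) ^ 2 + τ * σ⁻¹ * (1 - τ * σ * c ^ 2) * b ^ 2 := by
    field_simp
    ring
  have hpos : 0 < (a - c * τ * b) ^ 2 + τ * σ⁻¹ * (1 - τ * σ * c ^ 2) * b ^ 2 := by
    rcases eq_or_ne b 0 with rfl | hb
    · have ha : a ≠ 0 := hab.resolve_right (not_not.2 rfl)
      simpa using sq_pos_of_ne_zero ha
    · have hdet : 0 < 1 - τ * σ * c ^ 2 := sub_pos.2 h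
      positivity
  exact sub_pos.1 (pos_of_mul_pos_right (hsquare ▸ hpos) hτ.le)

/-- The preconditioning matrix `Φ_{τ,σ} = [[(1/τ)Iₙ, -Aᵀ], [-A, (1/σ)I_m]]` is
symmetric positive definite whenever `τσ‖A‖² < 1`. -/
theorem Phi_posDef
    (n m : ℕ) (τ σ : ℝ) (hτ : 0 < τ) (hσ : 0 < σ)
    (A : Matrix (Fin m) (Fin n) ℝ)
    (h : τ * σ * (opNorm A) ^ 2 < 1) :
    (Matrix.fromBlocks (τ⁻¹ • (1 : Matrix (Fin n) (Fin n) ℝ)) (-Aᵀ) (-A)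
      (σ⁻¹ • (1 : Matrix (Fin m) (Fin m) ℝ))).PosDef := by
  refine posDef_iff_dotProduct_mulVec.2 ⟨?_, fun z hz => ?_⟩
  · exact (isHermitian_one.smul (.all _)).fromBlocks (by simp) (isHermitian_one.smul (.all _))
  obtain ⟨x, y, rfl⟩ : ∃ x y, z = Sum.elim x y := ⟨_, _, (Sum.elim_comp_inl_inr z).symm⟩
  have hxy : WithLp.toLp 2 x ≠ 0 ∨ WithLp.toLp 2 y ≠ 0 := by
    by_contra! hxy
    simp_all
  rw [star_trivial, sumElim_dotProduct_fromBlocks_mulVec_sumElim,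
    dotProduct_self_eq_norm_toLp_sq x, dotProduct_self_eq_norm_toLp_sq y]
  have hform := two_mul_mul_mul_lt_inv_mul_sq_add_inv_mul_sq hτ hσ h
    (hxy.imp norm_ne_zero_iff.2 norm_ne_zero_iff.2)
  linarith [dotProduct_mulVec_le_opNorm_mul A x y]
end
end

section
/- Let τ, σ > 0, μ_f, μ_g > 0, A ∈ ℝ^{m×n} with τσ‖A‖² < 1, and set ρ̃ = min{μ_f τ, μ_g σ, κ} where κ = (μ_f τ + μ_g σ - √((μ_f τ - μ_g σ)² + 4‖A‖² μ_f μ_g τ² σ²)) / (2(1 - στ‖A‖²)). Then κ > 0 and the matrix diag(μ_f Iₙ, μ_g I_m) - ρ̃ Φ_{τ,σ} is positive semidefinite, where Φ_{τ,σ} = [[(1/τ)Iₙ,-Aᵀ],[-A,(1/σ)I_m]]. -/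
noncomputable section
open Matrix

/-!
With `a = μf τ`, `b = μg σ` and `c = στ‖A‖²` one has
`τσ ((μf - ρ/τ)(μg - ρ/σ) - ρ²‖A‖²) = (1 - c) ρ² - (a + b) ρ + a b`, and `κ` is the smaller root
of this quadratic. So for `ρ ≤ min (a, b, κ)` the matrix
`diag(μf, μg) - ρ Φ = [[(μf - ρ/τ) I, ρ Aᵀ], [ρ A, (μg - ρ/σ) I]]` has nonnegative diagonal
scalars `p, q` with `‖ρ A‖² ≤ p q`, and its quadratic form at `(x, y)` is at least
`p ‖x‖² + q ‖y‖² - 2 ‖ρ A‖ ‖x‖ ‖y‖ ≥ 0`.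
-/

open scoped Matrix.Norms.L2Operator
open WithLp

lemma opNorm_eq_norm {m n : ℕ} (A : Matrix (Fin m) (Fin n) ℝ) : opNorm A = ‖A‖ := rfl

lemma two_mul_mul_le_of_sq_le_mul {p q r : ℝ} (hp : 0 ≤ p) (hq : 0 ≤ q) (h : r ^ 2 ≤ p * q)
    (u v : ℝ) : 2 * r * u * v ≤ p * u ^ 2 + q * v ^ 2 := by
  rcases hp.eq_or_lt with rfl | hp
  · obtain rfl : r = 0 := by nlinarith
    nlinarith
  · have hsq : p * (p * u ^ 2 + q * v ^ 2 - 2 * r * u * v)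
        = (p * u - r * v) ^ 2 + (p * q - r ^ 2) * v ^ 2 := by ring
    nlinarith [sq_nonneg (p * u - r * v), mul_nonneg (sub_nonneg.2 h) (sq_nonneg v)]

lemma sub_sqrt_discrim_div_pos {α β γ : ℝ} (hα : 0 < α) (hβ : 0 < β) (hγ : 0 < γ) :
    0 < (β - √(discrim α β γ)) / (2 * α) := by
  have hsqrt : √(discrim α β γ) < β :=
    (Real.sqrt_lt' hβ).2 (by rw [discrim]; nlinarith [mul_pos hα hγ])
  exact div_pos (by linarith) (by linarith)

lemma quadratic_nonneg_of_le_sub_sqrt_discrim_div {α β γ ρ : ℝ} (hα : 0 < α)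
    (hρ : ρ ≤ (β - √(discrim α β γ)) / (2 * α)) : 0 ≤ α * ρ ^ 2 - β * ρ + γ := by
  set s := √(discrim α β γ)
  have hs : s ≤ β - 2 * α * ρ := by
    rw [le_div_iff₀ (by positivity)] at hρ
    linarith
  -- `√d ^ 2 = max d 0`, so this also covers a negative discriminant
  have hdisc : discrim α β γ ≤ s ^ 2 := by
    rw [Real.sq_sqrt']
    exact le_max_left _ _
  have hsq : s ^ 2 ≤ (β - 2 * α * ρ) ^ 2 := pow_le_pow_left₀ (Real.sqrt_nonneg _) hs 2
  have hcomplete : 4 * α * (α * ρ ^ 2 - β * ρ + γ) = (β - 2 * α * ρ) ^ 2 - discrim α β γ := by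
    rw [discrim]; ring
  exact (mul_nonneg_iff_of_pos_left (by positivity)).1 (by linarith)

section

variable {m n : Type*} [Fintype m] [Fintype n]

lemma dotProduct_self_eq_norm_toLp_sq_s18 (x : n → ℝ) : x ⬝ᵥ x = ‖toLp 2 x‖ ^ 2 := by
  rw [← real_inner_self_eq_norm_sq, EuclideanSpace.inner_toLp_toLp, star_trivial]

variable [DecidableEq n]

lemma abs_dotProduct_mulVec_le (A : Matrix m n ℝ) (x : n → ℝ) (y : m → ℝ) :
    |y ⬝ᵥ (A *ᵥ x)| ≤ ‖A‖ * ‖toLp 2 x‖ * ‖toLp 2 y‖ :=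
  calc |y ⬝ᵥ (A *ᵥ x)| = |inner ℝ (toLp 2 y) (toLp 2 (A *ᵥ x))| := by
        rw [EuclideanSpace.inner_toLp_toLp, star_trivial, dotProduct_comm]
    _ ≤ ‖toLp 2 (A *ᵥ x)‖ * ‖toLp 2 y‖ := by
        rw [mul_comm]
        exact abs_real_inner_le_norm _ _
    _ ≤ ‖A‖ * ‖toLp 2 x‖ * ‖toLp 2 y‖ := by
        gcongr
        exact A.l2_opNorm_mulVec (toLp 2 x)

variable [DecidableEq m]

lemma dotProduct_fromBlocks_smul_one_mulVec (p q : ℝ) (B : Matrix m n ℝ) (x : n → ℝ)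
    (y : m → ℝ) :
    Sum.elim x y ⬝ᵥ (fromBlocks (p • 1 : Matrix n n ℝ) Bᵀ B (q • 1) *ᵥ Sum.elim x y)
      = p * (x ⬝ᵥ x) + q * (y ⬝ᵥ y) + 2 * (y ⬝ᵥ (B *ᵥ x)) := by
  rw [fromBlocks_mulVec, sumElim_dotProduct_sumElim, Sum.elim_comp_inl, Sum.elim_comp_inr]
  simp only [dotProduct_add, smul_mulVec, one_mulVec, dotProduct_smul, smul_eq_mul,
    mulVec_transpose]
  rw [dotProduct_comm x (y ᵥ* B), ← dotProduct_mulVec]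
  ring

lemma posSemidef_fromBlocks_smul_one {p q : ℝ} (hp : 0 ≤ p) (hq : 0 ≤ q) (B : Matrix m n ℝ)
    (hB : ‖B‖ ^ 2 ≤ p * q) : (fromBlocks (p • 1 : Matrix n n ℝ) Bᵀ B (q • 1)).PosSemidef := by
  refine .of_dotProduct_mulVec_nonneg ?_ fun v => ?_
  · refine .fromBlocks ?_ ?_ ?_ <;> simp [IsHermitian]
  · obtain ⟨x, y, rfl⟩ : ∃ x y, v = Sum.elim x y := ⟨_, _, (Sum.elim_comp_inl_inr v).symm⟩
    rw [star_trivial, dotProduct_fromBlocks_smul_one_mulVec, dotProduct_self_eq_norm_toLp_sq_s18,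
      dotProduct_self_eq_norm_toLp_sq_s18]
    have hcross := neg_abs_le (y ⬝ᵥ (B *ᵥ x))
    have hbound := abs_dotProduct_mulVec_le B x y
    have hamgm := two_mul_mul_le_of_sq_le_mul hp hq hB ‖toLp 2 x‖ ‖toLp 2 y‖
    linarith

end

/-- The key matrix inequality for the Chambolle–Pock contraction rate under C1:
with `ρ̃ = min{μ_f τ, μ_g σ, κ}`, one has `κ > 0` and
`diag(μ_f Iₙ, μ_g I_m) - ρ̃ Φ_{τ,σ} ⪰ 0`. -/
theorem chambolle_pock_rate_matrix_inequality
    (n m : ℕ) (τ σ μf μg : ℝ) (hτ : 0 < τ) (hσ : 0 < σ)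
    (hμf : 0 < μf) (hμg : 0 < μg)
    (A : Matrix (Fin m) (Fin n) ℝ)
    (hstep : τ * σ * (opNorm A) ^ 2 < 1) :
    0 < (μf * τ + μg * σ -
        Real.sqrt ((μf * τ - μg * σ) ^ 2 + 4 * (opNorm A) ^ 2 * μf * μg * τ ^ 2 * σ ^ 2)) /
        (2 * (1 - σ * τ * (opNorm A) ^ 2)) ∧
      (Matrix.fromBlocks (μf • (1 : Matrix (Fin n) (Fin n) ℝ)) 0 0
            (μg • (1 : Matrix (Fin m) (Fin m) ℝ)) -
          min (min (μf * τ) (μg * σ))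
            ((μf * τ + μg * σ -
              Real.sqrt ((μf * τ - μg * σ) ^ 2 +
                4 * (opNorm A) ^ 2 * μf * μg * τ ^ 2 * σ ^ 2)) /
              (2 * (1 - σ * τ * (opNorm A) ^ 2))) •
          Matrix.fromBlocks (τ⁻¹ • (1 : Matrix (Fin n) (Fin n) ℝ)) (-Aᵀ) (-A)
            (σ⁻¹ • (1 : Matrix (Fin m) (Fin m) ℝ))).PosSemidef := by
  rw [opNorm_eq_norm] at hstep ⊢
  have hα : 0 < 1 - σ * τ * ‖A‖ ^ 2 := by linarith [mul_comm σ τ]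
  have hdisc : (μf * τ - μg * σ) ^ 2 + 4 * ‖A‖ ^ 2 * μf * μg * τ ^ 2 * σ ^ 2
      = discrim (1 - σ * τ * ‖A‖ ^ 2) (μf * τ + μg * σ) (μf * τ * (μg * σ)) := by
    rw [discrim]; ring
  rw [hdisc]
  refine ⟨sub_sqrt_discrim_div_pos hα (by positivity) (by positivity), ?_⟩
  set ρ := min (min (μf * τ) (μg * σ)) _
  have hρf : ρ ≤ μf * τ := (min_le_left _ _).trans (min_le_left _ _)
  have hρg : ρ ≤ μg * σ := (min_le_left _ _).trans (min_le_right _ _)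
  have hQ := quadratic_nonneg_of_le_sub_sqrt_discrim_div (ρ := ρ) hα (min_le_right _ _)
  have hblocks : fromBlocks (μf • 1) 0 0 (μg • 1) - ρ • fromBlocks (τ⁻¹ • 1) (-Aᵀ) (-A) (σ⁻¹ • 1)
      = fromBlocks ((μf - ρ * τ⁻¹) • 1) (ρ • A)ᵀ (ρ • A) ((μg - ρ * σ⁻¹) • 1) := by
    simp [sub_eq_add_neg, fromBlocks_smul, fromBlocks_neg, fromBlocks_add, add_smul, smul_smul]
  rw [hblocks]
  refine posSemidef_fromBlocks_smul_one ?_ ?_ _ ?_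
  · rw [sub_nonneg, ← div_eq_mul_inv, div_le_iff₀ hτ]; linarith
  · rw [sub_nonneg, ← div_eq_mul_inv, div_le_iff₀ hσ]; linarith
  · have hfactor : (μf - ρ * τ⁻¹) * (μg - ρ * σ⁻¹) - ρ ^ 2 * ‖A‖ ^ 2
        = ((1 - σ * τ * ‖A‖ ^ 2) * ρ ^ 2 - (μf * τ + μg * σ) * ρ + μf * τ * (μg * σ))
          / (τ * σ) := by
      field_simp
      ring
    rw [norm_smul, Real.norm_eq_abs, mul_pow, sq_abs]
    linarith [div_nonneg hQ (by positivity : (0 : ℝ) ≤ τ * σ)]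
end
end
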